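/- For the weak call-by-need calculus with explicit substitutions, a term t reduces to t' by the inductively defined dB-rule (t ⇒_{dB} t') if and only if there exist an evaluation context E and terms r, r' such that t = E[r], r ↦_{dB} r', and t' = E[r'], where (λx.t)L u ↦_{dB} t[x\u]L. -/

import Mathlib

inductive Tm : Type
  | var : ℕ → Tm
  | lam : ℕ → Tm → Tm
  | app : Tm → Tm → Tm
  | es  : ℕ → Tm → Tm → Tm
  deriving DecidableEq

/-- Rule kinds: dB, lsv, the probe id(x), and the substitution sub(x,v). -/
inductive Rule : Type
  | db : Rule
  | lsv : Rule
  | idr : ℕ → Rule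
  | sub : ℕ → Tm → Rule

/-- A value is a λ-abstraction. -/
def IsValue : Tm → Prop := fun t => ∃ x b, t = .lam x b

/-- Auxiliary dB reduction: (dB-base) `(λx.t) u ↝ t[x\u]`;
(dB-σ) if `t u ↝ s` then `t[x\w] u ↝ s[x\w]`. -/
inductive AuxDB : Tm → Tm → Prop
  | base (x : ℕ) (t u : Tm) : AuxDB (.app (.lam x t) u) (.es x t u)
  | sigma {t u s : Tm} (x : ℕ) (w : Tm) :
      AuxDB (.app t u) s → AuxDB (.app (.es x t w) u) (.es x s w)

mutual
/-- Inductive presentation of weak call-by-need reduction `t ⇒_ρ t'`. -/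
inductive Red : Rule → Tm → Tm → Prop
  | appLeft {ρ t t'} (u : Tm) : Red ρ t t' → Red ρ (.app t u) (.app t' u)
  | esLeft {ρ t t'} (x : ℕ) (u : Tm) : Red ρ t t' → Red ρ (.es x t u) (.es x t' u)
  | esRight {ρ u u'} (x : ℕ) (t : Tm) :
      Red (.idr x) t t → Red ρ u u' → Red ρ (.es x t u) (.es x t u')
  | idr (x : ℕ) : Red (.idr x) (.var x) (.var x)
  | sub (x : ℕ) (v : Tm) : Red (.sub x v) (.var x) v
  | db {t t'} : AuxDB t t' → Red .db t t'
  | lsv {t t'} : AuxLSV t t' → Red .lsv t t'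

/-- Auxiliary lsv reduction. -/
inductive AuxLSV : Tm → Tm → Prop
  | base {t t'} (x : ℕ) {v : Tm} :
      Red (.sub x v) t t' → IsValue v → AuxLSV (.es x t v) (.es x t' v)
  | sigma {t u t'} (x y : ℕ) (w : Tm) :
      AuxLSV (.es x t u) t' → AuxLSV (.es x t (.es y u w)) (.es y t' w)
end

/-- Evaluation contexts `E ::= • | E u | E[x\u] | E₁[[x]][x\E₂]`. -/
inductive ECtx : Type
  | hole : ECtx
  | appL : ECtx → Tm → ECtx
  | esL : ECtx → ℕ → Tm → ECtx
  | esR : ECtx → ℕ → ECtx → ECtx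

/-- Plugging a term in the hole of an evaluation context. -/
def ECtx.plug : ECtx → Tm → Tm
  | .hole, t => t
  | .appL E u, t => .app (E.plug t) u
  | .esL E x u, t => .es x (E.plug t) u
  | .esR E₁ x E₂, t => .es x (E₁.plug (.var x)) (E₂.plug t)

/-- `t L` : a list of explicit substitutions applied to `t`. -/
def applyL (t : Tm) (L : List (ℕ × Tm)) : Tm :=
  L.foldl (fun s p => .es p.1 s p.2) t

/-- The base rule `(λx.t)L u ↦_dB t[x\u]L` of the context-based presentation. -/
def MapsDB (r r' : Tm) : Prop :=
  ∃ x s L u, r = .app (applyL (.lam x s) L) u ∧ r' = applyL (.es x s u) L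

/-!
The auxiliary relation `↝_dB` is exactly `↦_dB`: its σ-rule pushes the application through the
substitution list `L` one entry at a time, from the outside in. The congruence rules of `⇒_ρ` are the
clauses of evaluation contexts, the premise `t ⇒_{id(x)} t` of (es-right) saying exactly that
`t = E[[x]]` for some evaluation context `E`.
-/

lemma applyL_append (t : Tm) (L L' : List (ℕ × Tm)) :
    applyL t (L ++ L') = applyL (applyL t L) L' :=
  List.foldl_append

lemma auxDB_iff_mapsDB {r r' : Tm} : AuxDB r r' ↔ MapsDB r r' := by
  constructor
  · intro h
    induction h with
    | base x t u => exact ⟨x, t, [], u, rfl, rfl⟩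
    | @sigma _ u _ x w _ ih =>
      obtain ⟨y, s, L, u₀, happ, rfl⟩ := ih
      obtain ⟨rfl, rfl⟩ := Tm.app.inj happ
      exact ⟨y, s, L ++ [(x, w)], u, by rw [applyL_append]; rfl, by rw [applyL_append]; rfl⟩
  · rintro ⟨x, s, L, u, rfl, rfl⟩
    induction L using List.reverseRecOn with
    | nil => exact AuxDB.base x s u
    | append_singleton L p ih =>
      rw [applyL_append, applyL_append]
      exact AuxDB.sigma p.1 p.2 ih

namespace ECtx

lemma red_idr_plug_var (E : ECtx) (x : ℕ) : Red (.idr x) (E.plug (.var x)) (E.plug (.var x)) := by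
  induction E generalizing x with
  | hole => exact Red.idr x
  | appL E u ih => exact Red.appLeft u (ih x)
  | esL E y u ih => exact Red.esLeft y u (ih x)
  | esR E₁ y E₂ ih₁ ih₂ => exact Red.esRight y _ (ih₁ y) (ih₂ x)

lemma red_db_plug (E : ECtx) {r r' : Tm} (h : MapsDB r r') : Red .db (E.plug r) (E.plug r') := by
  induction E with
  | hole => exact Red.db (auxDB_iff_mapsDB.mpr h)
  | appL E u ih => exact Red.appLeft u ih
  | esL E y u ih => exact Red.esLeft y u ih
  | esR E₁ y E₂ _ ih₂ => exact Red.esRight y _ (E₁.red_idr_plug_var y) ih₂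

end ECtx

lemma exists_plug_var_of_red_idr {x : ℕ} {t t' : Tm} (h : Red (.idr x) t t') :
    ∃ E : ECtx, t = E.plug (.var x) := by
  generalize hρ : Rule.idr x = ρ at h
  induction h using Red.rec (motive_2 := fun _ _ _ => True) generalizing x with
  | appLeft u _ ih =>
    obtain ⟨E, rfl⟩ := ih hρ
    exact ⟨.appL E u, rfl⟩
  | esLeft y u _ ih =>
    obtain ⟨E, rfl⟩ := ih hρ
    exact ⟨.esL E y u, rfl⟩
  | esRight y u _ _ ih₁ ih₂ =>
    obtain ⟨E₁, rfl⟩ := ih₁ rfl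
    obtain ⟨E₂, rfl⟩ := ih₂ hρ
    exact ⟨.esR E₁ y E₂, rfl⟩
  | idr y =>
    cases hρ
    exact ⟨.hole, rfl⟩
  | sub | db | lsv => cases hρ
  | base | sigma => trivial

lemma exists_plug_of_red_db {t t' : Tm} (h : Red .db t t') :
    ∃ (E : ECtx) (r r' : Tm), t = E.plug r ∧ MapsDB r r' ∧ t' = E.plug r' := by
  generalize hρ : Rule.db = ρ at h
  induction h using Red.rec (motive_2 := fun _ _ _ => True) with
  | appLeft u _ ih =>
    obtain ⟨E, r, r', rfl, hr, rfl⟩ := ih hρ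
    exact ⟨.appL E u, r, r', rfl, hr, rfl⟩
  | esLeft y u _ ih =>
    obtain ⟨E, r, r', rfl, hr, rfl⟩ := ih hρ
    exact ⟨.esL E y u, r, r', rfl, hr, rfl⟩
  | esRight y u hid _ _ ih₂ =>
    obtain ⟨E₁, rfl⟩ := exists_plug_var_of_red_idr hid
    obtain ⟨E₂, r, r', rfl, hr, rfl⟩ := ih₂ hρ
    exact ⟨.esR E₁ y E₂, r, r', rfl, hr, rfl⟩
  | db h => exact ⟨.hole, _, _, rfl, auxDB_iff_mapsDB.mp h, rfl⟩
  | idr | sub | lsv => cases hρ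
  | base | sigma => trivial

/-- `t ⇒_dB t'` iff the reduction decomposes as an evaluation
context around a `↦_dB` base step. -/
theorem red_db_iff_ectx (t t' : Tm) :
    Red .db t t' ↔
      ∃ (E : ECtx) (r r' : Tm), t = E.plug r ∧ MapsDB r r' ∧ t' = E.plug r' := by
  constructor
  · exact exists_plug_of_red_db
  · rintro ⟨E, r, r', rfl, hr, rfl⟩
    exact E.red_db_plug hr
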